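/- If Γ ⊢_{HWF} A then Γ ⊢_{NWF} A; that is, every formula derivable from assumptions Γ in the restricted Hilbert system WF is derivable from Γ in the natural deduction system NWF. -/

import Mathlib

/-- Formulas of subintuitionistic propositional logic. -/
inductive Fml : Type
  | atom : ℕ → Fml
  | bot  : Fml
  | and  : Fml → Fml → Fml
  | or   : Fml → Fml → Fml
  | imp  : Fml → Fml → Fml
deriving DecidableEq

/-- `A ↔ B` abbreviates `(A → B) ∧ (B → A)`. -/
def Fml.biimp (A B : Fml) : Fml := (A.imp B).and (B.imp A)

/-- The extra axiom schemes / rules among I, C, D, Ĉ, D̂, N, N₂. -/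
inductive ExtAx : Type
  | I | C | D | Chat | Dhat | N | N2
deriving DecidableEq

/-- Theorems of the Hilbert system WF extended with the schemes/rules in `E`
(derivations with no assumptions; all rules unrestricted here). -/
inductive HThm (E : Set ExtAx) : Fml → Prop
  | ax1 (A B : Fml)   : HThm E (A.imp (A.or B))
  | ax2 (A B : Fml)   : HThm E (B.imp (A.or B))
  | ax3 (A B : Fml)   : HThm E ((A.and B).imp A)
  | ax4 (A B : Fml)   : HThm E ((A.and B).imp B)
  | ax7 (A B C : Fml) : HThm E ((A.and (B.or C)).imp ((A.and B).or (A.and C)))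
  | ax8 (A : Fml)     : HThm E (A.imp A)
  | ax14 (A : Fml)    : HThm E (Fml.bot.imp A)
  | mp {A B : Fml}    : HThm E A → HThm E (A.imp B) → HThm E B
  | af {A : Fml} (B : Fml) : HThm E A → HThm E (B.imp A)
  | tr {A B C : Fml}  : HThm E (A.imp B) → HThm E (B.imp C) → HThm E (A.imp C)
  | rc {A B C : Fml}  : HThm E (A.imp B) → HThm E (A.imp C) → HThm E (A.imp (B.and C))
  | rd {A B C : Fml}  : HThm E (A.imp C) → HThm E (B.imp C) → HThm E ((A.or B).imp C)
  | conj {A B : Fml}  : HThm E A → HThm E B → HThm E (A.and B)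
  | re {A B C D : Fml} : HThm E (A.biimp B) → HThm E (C.biimp D) →
      HThm E ((A.imp C).biimp (B.imp D))
  | axI (A B C : Fml) : ExtAx.I ∈ E →
      HThm E (((A.imp B).and (B.imp C)).imp (A.imp C))
  | axC (A B C : Fml) : ExtAx.C ∈ E →
      HThm E (((A.imp B).and (A.imp C)).imp (A.imp (B.and C)))
  | axD (A B C : Fml) : ExtAx.D ∈ E →
      HThm E (((A.imp C).and (B.imp C)).imp ((A.or B).imp C))
  | axChat (A B C : Fml) : ExtAx.Chat ∈ E →
      HThm E ((A.imp (B.and C)).imp ((A.imp B).and (A.imp C)))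
  | axDhat (A B C : Fml) : ExtAx.Dhat ∈ E →
      HThm E (((A.or B).imp C).imp ((A.imp C).and (B.imp C)))
  | ruleN {A B C D : Fml} : ExtAx.N ∈ E →
      HThm E (A.imp (B.or C)) → HThm E (C.imp (A.or D)) →
      HThm E ((A.and D).imp B) → HThm E ((C.and B).imp D) →
      HThm E ((A.imp B).biimp (C.imp D))
  | ruleN2 {A B C D : Fml} : ExtAx.N2 ∈ E →
      HThm E (C.imp (A.or D)) → HThm E ((C.and B).imp D) →
      HThm E ((A.imp B).imp (C.imp D))

/-- Restricted derivability from assumptions in the Hilbert system WF + `E`: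
besides assumptions and theorems, only the conjunction rule is unrestricted, and
modus ponens may be used only when the major premise `A → B` is a theorem
(derived with no assumptions); all other rules are confined to theorems. -/
inductive HDer (E : Set ExtAx) (Γ : Set Fml) : Fml → Prop
  | hyp {A : Fml}  : A ∈ Γ → HDer E Γ A
  | thm {A : Fml}  : HThm E A → HDer E Γ A
  | conj {A B : Fml} : HDer E Γ A → HDer E Γ B → HDer E Γ (A.and B)
  | mp {A B : Fml} : HDer E Γ A → HThm E (A.imp B) → HDer E Γ B

/-- Tags for the optional implication-introduction rules of the natural
deduction systems. -/
inductive NRule : Type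
  | impI1 | impI2 | impN | impN2 | impChat | impDhat | impAnd | impOr | impTr
deriving DecidableEq

/-- Natural deduction derivations for the system with optional rules `R`.
`Deriv R Γ A` is a derivation of `A` all of whose open assumptions lie in `Γ`. -/
inductive Deriv (R : Set NRule) : Set Fml → Fml → Type
  | hyp (Γ : Set Fml) (A : Fml) : A ∈ Γ → Deriv R Γ A
  | andI {Γ : Set Fml} {A B : Fml} :
      Deriv R Γ A → Deriv R Γ B → Deriv R Γ (A.and B)
  | andE1 {Γ : Set Fml} {A B : Fml} :
      Deriv R Γ (A.and B) → Deriv R Γ A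
  | andE2 {Γ : Set Fml} {A B : Fml} :
      Deriv R Γ (A.and B) → Deriv R Γ B
  | orI1 {Γ : Set Fml} {A : Fml} (B : Fml) :
      Deriv R Γ A → Deriv R Γ (A.or B)
  | orI2 {Γ : Set Fml} (A : Fml) {B : Fml} :
      Deriv R Γ B → Deriv R Γ (A.or B)
  | orE {Γ : Set Fml} {A B C : Fml} :
      Deriv R Γ (A.or B) → Deriv R (insert A Γ) C → Deriv R (insert B Γ) C →
      Deriv R Γ C
  | botE {Γ : Set Fml} (A : Fml) :
      Deriv R Γ Fml.bot → Deriv R Γ A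
  | impI {Γ : Set Fml} {A B : Fml} :
      Deriv R {A} B → Deriv R Γ (A.imp B)
  | impE {Γ : Set Fml} {A B : Fml} :
      Deriv R Γ A → Deriv R (∅ : Set Fml) (A.imp B) → Deriv R Γ B
  | impI1 {Γ : Set Fml} {A B D : Fml} :
      NRule.impI1 ∈ R → Deriv R {B} D → Deriv R {D} B →
      Deriv R Γ ((A.imp B).imp (A.imp D))
  | impI2 {Γ : Set Fml} {A B D : Fml} :
      NRule.impI2 ∈ R → Deriv R {B} D → Deriv R {D} B →
      Deriv R Γ ((B.imp A).imp (D.imp A))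
  | impIN {Γ : Set Fml} {A B C D : Fml} :
      NRule.impN ∈ R →
      Deriv R {A} (C.or B) → Deriv R {D} B → Deriv R {C} (A.or D) → Deriv R {B} D →
      Deriv R Γ ((A.imp B).imp (C.imp D))
  | impIN2 {Γ : Set Fml} {A B C D : Fml} :
      NRule.impN2 ∈ R →
      Deriv R {C} (A.or D) → Deriv R {B} D →
      Deriv R Γ ((A.imp B).imp (C.imp D))
  | impIChat {Γ : Set Fml} {A B : Fml} (C : Fml) :
      NRule.impChat ∈ R → Deriv R {A} B →
      Deriv R Γ ((C.imp A).imp (C.imp B))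
  | impIDhat {Γ : Set Fml} {A B : Fml} (C : Fml) :
      NRule.impDhat ∈ R → Deriv R {A} B →
      Deriv R Γ ((B.imp C).imp (A.imp C))
  | impIAnd {Γ : Set Fml} {A B C : Fml} :
      NRule.impAnd ∈ R → Deriv R Γ (A.imp B) → Deriv R Γ (A.imp C) →
      Deriv R Γ (A.imp (B.and C))
  | impIOr {Γ : Set Fml} {A B C : Fml} :
      NRule.impOr ∈ R → Deriv R Γ (A.imp C) → Deriv R Γ (B.imp C) →
      Deriv R Γ ((A.or B).imp C)
  | impITr {Γ : Set Fml} {A B C : Fml} :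
      NRule.impTr ∈ R → Deriv R Γ (A.imp B) → Deriv R Γ (B.imp C) →
      Deriv R Γ (A.imp C)

/-- `Γ ⊢ A` in the natural deduction system with optional rules `R`. -/
def NDer (R : Set NRule) (Γ : Set Fml) (A : Fml) : Prop :=
  Nonempty (Deriv R Γ A)

/-- A derivation may serve as the major premise of an elimination rule in a
normal derivation: it is an assumption or ends with an elimination rule
different from ∨E (i.e. ∧E or →E). -/
def Deriv.MajorOK : ∀ {R : Set NRule} {Γ : Set Fml} {A : Fml}, Deriv R Γ A → Prop
  | _, _, _, .hyp _ _ _ => True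
  | _, _, _, .andE1 _   => True
  | _, _, _, .andE2 _   => True
  | _, _, _, .impE _ _  => True
  | _, _, _, _          => False

/-- A derivation is normal if every major premise of an elimination rule is
either an assumption or the conclusion of an elimination rule different
from ∨E. -/
def Deriv.Normal {R : Set NRule} : ∀ {Γ : Set Fml} {A : Fml}, Deriv R Γ A → Prop
  | _, _, .hyp _ _ _ => True
  | _, _, .andI d e => d.Normal ∧ e.Normal
  | _, _, .andE1 d => d.MajorOK ∧ d.Normal
  | _, _, .andE2 d => d.MajorOK ∧ d.Normal
  | _, _, .orI1 _ d => d.Normal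
  | _, _, .orI2 _ d => d.Normal
  | _, _, .orE d e f => d.MajorOK ∧ d.Normal ∧ e.Normal ∧ f.Normal
  | _, _, .botE _ d => d.Normal
  | _, _, .impI d => d.Normal
  | _, _, .impE d e => e.MajorOK ∧ d.Normal ∧ e.Normal
  | _, _, .impI1 _ d e => d.Normal ∧ e.Normal
  | _, _, .impI2 _ d e => d.Normal ∧ e.Normal
  | _, _, .impIN _ d e f g => d.Normal ∧ e.Normal ∧ f.Normal ∧ g.Normal
  | _, _, .impIN2 _ d e => d.Normal ∧ e.Normal
  | _, _, .impIChat _ _ d => d.Normal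
  | _, _, .impIDhat _ _ d => d.Normal
  | _, _, .impIAnd _ d e => d.Normal ∧ e.Normal
  | _, _, .impIOr _ d e => d.Normal ∧ e.Normal
  | _, _, .impITr _ d e => d.Normal ∧ e.Normal

/-! Every WF-theorem has a closed natural deduction derivation: the axioms are
derived directly, the rules AF, Tr, RC, RD become →I applied to →E with closed
major premises, and RE is exactly what →I₁ and →I₂ provide. A restricted
HWF-derivation from Γ uses only assumptions, theorems, Conj and MP with a closed
major premise, all of which NWF simulates over Γ. -/

namespace Deriv

variable {R : Set NRule}

def weaken : ∀ {Γ Δ : Set Fml} {A : Fml}, Γ ⊆ Δ → Deriv R Γ A → Deriv R Δ A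
  | _, _, _, h, .hyp _ A hA => .hyp _ A (h hA)
  | _, _, _, h, .andI d e => .andI (d.weaken h) (e.weaken h)
  | _, _, _, h, .andE1 d => .andE1 (d.weaken h)
  | _, _, _, h, .andE2 d => .andE2 (d.weaken h)
  | _, _, _, h, .orI1 B d => .orI1 B (d.weaken h)
  | _, _, _, h, .orI2 A d => .orI2 A (d.weaken h)
  | _, _, _, h, .orE d e f =>
      .orE (d.weaken h) (e.weaken (Set.insert_subset_insert h))
        (f.weaken (Set.insert_subset_insert h))
  | _, _, _, h, .botE A d => .botE A (d.weaken h)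
  | _, _, _, _, .impI d => .impI d
  | _, _, _, h, .impE d e => .impE (d.weaken h) e
  | _, _, _, _, .impI1 hr d e => .impI1 hr d e
  | _, _, _, _, .impI2 hr d e => .impI2 hr d e
  | _, _, _, _, .impIN hr d e f g => .impIN hr d e f g
  | _, _, _, _, .impIN2 hr d e => .impIN2 hr d e
  | _, _, _, _, .impIChat C hr d => .impIChat C hr d
  | _, _, _, _, .impIDhat C hr d => .impIDhat C hr d
  | _, _, _, h, .impIAnd hr d e => .impIAnd hr (d.weaken h) (e.weaken h)
  | _, _, _, h, .impIOr hr d e => .impIOr hr (d.weaken h) (e.weaken h)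
  | _, _, _, h, .impITr hr d e => .impITr hr (d.weaken h) (e.weaken h)

def ofClosed {Γ : Set Fml} {A : Fml} (d : Deriv R ∅ A) : Deriv R Γ A :=
  d.weaken (Set.empty_subset Γ)

def assume (A : Fml) : Deriv R {A} A :=
  .hyp _ A (Set.mem_singleton A)

def elimClosed {A B : Fml} (d : Deriv R ∅ (A.imp B)) : Deriv R {A} B :=
  .impE (assume A) d

def impSelf (A : Fml) : Deriv R ∅ (A.imp A) :=
  .impI (assume A)

def impTrans {A B C : Fml} (d : Deriv R ∅ (A.imp B)) (e : Deriv R ∅ (B.imp C)) :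
    Deriv R ∅ (A.imp C) :=
  .impI (.impE d.elimClosed e)

def impAnd {A B C : Fml} (d : Deriv R ∅ (A.imp B)) (e : Deriv R ∅ (A.imp C)) :
    Deriv R ∅ (A.imp (B.and C)) :=
  .impI (.andI d.elimClosed e.elimClosed)

def impOr {A B C : Fml} (d : Deriv R ∅ (A.imp C)) (e : Deriv R ∅ (B.imp C)) :
    Deriv R ∅ ((A.or B).imp C) :=
  .impI <| .orE (assume _)
    (.impE (.hyp _ A (Set.mem_insert _ _)) d)
    (.impE (.hyp _ B (Set.mem_insert _ _)) e)

def andOrDistrib (A B C : Fml) :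
    Deriv R ∅ ((A.and (B.or C)).imp ((A.and B).or (A.and C))) :=
  have hA {D : Fml} : Deriv R (insert D {A.and (B.or C)}) A :=
    .andE1 (.hyp _ _ (Set.mem_insert_of_mem _ (Set.mem_singleton _)))
  .impI <| .orE (.andE2 (assume _))
    (.orI1 _ (.andI hA (.hyp _ B (Set.mem_insert _ _))))
    (.orI2 _ (.andI hA (.hyp _ C (Set.mem_insert _ _))))

/-- Rewrite the consequent with →I₁, then the antecedent with →I₂. -/
def impCongr (h₁ : NRule.impI1 ∈ R) (h₂ : NRule.impI2 ∈ R) {A B C D : Fml}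
    (dAB : Deriv R ∅ (A.biimp B)) (dCD : Deriv R ∅ (C.biimp D)) :
    Deriv R ∅ ((A.imp C).biimp (B.imp D)) :=
  have hAB : Deriv R {A} B := (Deriv.andE1 dAB).elimClosed
  have hBA : Deriv R {B} A := (Deriv.andE2 dAB).elimClosed
  have hCD : Deriv R {C} D := (Deriv.andE1 dCD).elimClosed
  have hDC : Deriv R {D} C := (Deriv.andE2 dCD).elimClosed
  .andI ((Deriv.impI1 h₁ hCD hDC).impTrans (.impI2 h₂ hAB hBA))
    ((Deriv.impI1 h₁ hDC hCD).impTrans (.impI2 h₂ hBA hAB))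

end Deriv

theorem NDer.of_hThm {R : Set NRule} (h₁ : NRule.impI1 ∈ R) (h₂ : NRule.impI2 ∈ R)
    {A : Fml} (h : HThm ∅ A) : NDer R ∅ A := by
  induction h with
  | ax1 A B => exact ⟨.impI (.orI1 B (.assume A))⟩
  | ax2 A B => exact ⟨.impI (.orI2 A (.assume B))⟩
  | ax3 A B => exact ⟨.impI (.andE1 (.assume (A.and B)))⟩
  | ax4 A B => exact ⟨.impI (.andE2 (.assume (A.and B)))⟩
  | ax7 A B C => exact ⟨.andOrDistrib A B C⟩
  | ax8 A => exact ⟨.impSelf A⟩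
  | ax14 A => exact ⟨.impI (.botE A (.assume .bot))⟩
  | mp _ _ ihA ihAB => exact ihA.map2 .impE ihAB
  | af B _ ih => exact ih.map fun d => .impI d.ofClosed
  | tr _ _ ih₁ ih₂ => exact ih₁.map2 .impTrans ih₂
  | rc _ _ ih₁ ih₂ => exact ih₁.map2 .impAnd ih₂
  | rd _ _ ih₁ ih₂ => exact ih₁.map2 .impOr ih₂
  | conj _ _ ih₁ ih₂ => exact ih₁.map2 .andI ih₂
  | re _ _ ih₁ ih₂ => exact ih₁.map2 (.impCongr h₁ h₂) ih₂
  | axI _ _ _ h | axC _ _ _ h | axD _ _ _ h | axChat _ _ _ h | axDhat _ _ _ h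
  | ruleN h | ruleN2 h => cases h

theorem hilbert_to_natded_WF (Γ : Set Fml) (A : Fml)
    (h : HDer (∅ : Set ExtAx) Γ A) :
    NDer {NRule.impI1, NRule.impI2} Γ A := by
  have of_hThm {B : Fml} (hB : HThm ∅ B) : NDer {NRule.impI1, NRule.impI2} ∅ B :=
    NDer.of_hThm (by simp) (by simp) hB
  induction h with
  | hyp hA => exact ⟨.hyp _ _ hA⟩
  | thm hA => exact (of_hThm hA).map Deriv.ofClosed
  | conj _ _ ih₁ ih₂ => exact ih₁.map2 .andI ih₂
  | mp _ hAB ih => exact ih.map2 .impE (of_hThm hAB)
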